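/- arXiv:1111.0039 — 3 statements merged into one kernel-verified Lean document; each statement's English description precedes it below -/
import Mathlib

section
/- Strict version of value-restriction propagation: under the same hypotheses, if (∀R.C)(a) > v and 1 − R(a,b) ≤ v, then (∀R.C)(b) > v. -/
theorem value_restriction_propagation_strict {Δ : Type*} [Nonempty Δ]
    (R : Δ → Δ → ℝ) (C : Δ → ℝ)
    (hR : ∀ a b, R a b ∈ Set.Icc (0:ℝ) 1) (hC : ∀ a, C a ∈ Set.Icc (0:ℝ) 1)
    (htrans : ∀ a c, (⨆ b, min (R a b) (R b c)) ≤ R a c)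
    (v : ℝ) (hv : v ∈ Set.Icc (0:ℝ) 1) (a b : Δ)
    (h : v < ⨅ d, max (1 - R a d) (C d)) (hab : 1 - R a b ≤ v) :
    v < ⨅ d, max (1 - R b d) (C d) := by
  have hbdd : ∀ d, BddAbove (Set.range fun b' => min (R d b') (R b' d)) := by
    intro d
    exact ⟨1, by rintro x ⟨y, rfl⟩; exact le_trans (min_le_left _ _) (hR d y).2⟩
  have key : ∀ d, (⨅ d, max (1 - R a d) (C d)) ≤ max (1 - R b d) (C d) := by
    intro d
    have hRad : min (R a b) (R b d) ≤ R a d := by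
      refine le_trans ?_ (htrans a d)
      refine le_ciSup (f := fun b' => min (R a b') (R b' d)) ⟨1, ?_⟩ b
      rintro x ⟨y, rfl⟩
      simpa using le_trans (min_le_left (R a y) (R y d)) (hR a y).2
    have h1 : 1 - R a d ≤ max v (1 - R b d) := by
      rcases le_total (R a b) (R b d) with hc | hc
      · rw [min_eq_left hc] at hRad; exact le_max_of_le_left (by linarith)
      · rw [min_eq_right hc] at hRad; exact le_max_of_le_right (by linarith)
    have hfd : max (1 - R a d) (C d) ≤ max v (max (1 - R b d) (C d)) := by
      rcases le_total (1 - R a d) (C d) with hc | hc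
      · rw [max_eq_right hc]; exact le_max_of_le_right (le_max_right _ _)
      · refine le_trans (max_le h1 (le_trans hc h1)) ?_
        exact max_le (le_max_left _ _) (le_max_of_le_right (le_max_left _ _))
    have hinf : (⨅ d, max (1 - R a d) (C d)) ≤ max (1 - R a d) (C d) := by
      refine ciInf_le ⟨0, ?_⟩ d
      rintro x ⟨y, rfl⟩
      exact le_max_of_le_right (hC y).1
    have := le_trans hinf hfd
    rcases le_total (max (1 - R b d) (C d)) v with hc | hc
    · rw [max_eq_left hc] at this; linarith
    · rwa [max_eq_right hc] at this
  exact lt_of_lt_of_le h (le_ciInf key)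
end

section
/- In fuzzy Kleene-Dienes semantics, the value restriction of a value restriction is entailed on transitive roles: if R is sup-min transitive and (∀R.C)(a) ≥ n, then (∀R.(∀R.C))(a) ≥ n, where (∀R.D)(x) := inf_y max(1 − R(x,y), D(y)). -/
theorem forall_forall_transitive {Δ : Type*} [Nonempty Δ]
    (R : Δ → Δ → ℝ) (C : Δ → ℝ)
    (hR : ∀ a b, R a b ∈ Set.Icc (0:ℝ) 1) (hC : ∀ a, C a ∈ Set.Icc (0:ℝ) 1)
    (htrans : ∀ a c, (⨆ b, min (R a b) (R b c)) ≤ R a c)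
    (n : ℝ) (hn : n ∈ Set.Icc (0:ℝ) 1) (a : Δ)
    (h : n ≤ ⨅ d, max (1 - R a d) (C d)) :
    n ≤ ⨅ b, max (1 - R a b) (⨅ d, max (1 - R b d) (C d)) := by
  have hbdd : ∀ x : Δ, BddBelow (Set.range fun d => max (1 - R x d) (C d)) := by
    intro x
    refine ⟨0, ?_⟩
    rintro _ ⟨d, rfl⟩
    exact le_max_of_le_right (hC d).1
  have hkey : ∀ d : Δ, n ≤ max (1 - R a d) (C d) := by
    intro d
    exact h.trans (ciInf_le (hbdd a) d)
  have hRbd : ∀ b d : Δ, min (R a b) (R b d) ≤ R a d := by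
    intro b d
    refine le_trans ?_ (htrans a d)
    apply le_ciSup_of_le ?_ b le_rfl
    refine ⟨1, ?_⟩
    rintro _ ⟨b', rfl⟩
    exact le_trans (min_le_left _ _) (hR a b').2
  apply le_ciInf
  intro b
  rcases le_or_gt n (1 - R a b) with hb | hb
  · exact le_max_of_le_left hb
  · refine le_max_of_le_right (le_ciInf fun d => ?_)
    rcases le_or_gt n (1 - R b d) with hd | hd
    · exact le_max_of_le_left hd
    · refine le_max_of_le_right ?_
      have := hkey d
      rcases le_or_gt n (1 - R a d) with had | had
      · exfalso
        have : R a d ≤ 1 - n := by linarith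
        have h2 : min (R a b) (R b d) ≤ 1 - n := (hRbd b d).trans this
        rcases min_le_iff.mp h2 with h3 | h3 <;> linarith
      · by_contra hc
        push_neg at hc
        exact absurd this (not_le.mpr (max_lt had hc))
end

section
/- Role hierarchy propagation of value restrictions: let R, P : Δ → Δ → [0,1] with P pointwise ≤ R (P subrole of R) and P sup-min transitive. If (∀R.C)(a) ≥ n, then for every b, either 1 − P(a,b) ≥ n or (∀P.C)(b) ≥ n; consequently (∀P.(∀P.C))(a) ≥ n. -/
theorem role_hierarchy_propagation {Δ : Type*} [Nonempty Δ]
    (R P : Δ → Δ → ℝ) (C : Δ → ℝ)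
    (hR : ∀ a b, R a b ∈ Set.Icc (0:ℝ) 1) (hP : ∀ a b, P a b ∈ Set.Icc (0:ℝ) 1)
    (hC : ∀ x, C x ∈ Set.Icc (0:ℝ) 1)
    (hPR : ∀ a b, P a b ≤ R a b)
    (htrans : ∀ a c, (⨆ b, min (P a b) (P b c)) ≤ P a c)
    (n : ℝ) (hn : n ∈ Set.Icc (0:ℝ) 1) (a : Δ)
    (h : n ≤ ⨅ d, max (1 - R a d) (C d)) :
    (∀ b, n ≤ 1 - P a b ∨ n ≤ ⨅ d, max (1 - P b d) (C d)) ∧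
    n ≤ ⨅ b, max (1 - P a b) (⨅ d, max (1 - P b d) (C d)) := by
  have hmax : ∀ d, n ≤ max (1 - R a d) (C d) := by
    intro d
    refine le_trans h (ciInf_le ?_ d)
    exact ⟨0, fun x ⟨d', hd'⟩ => hd' ▸ le_max_of_le_right (hC d').1⟩
  have key : ∀ b, n ≤ 1 - P a b ∨ n ≤ ⨅ d, max (1 - P b d) (C d) := by
    intro b
    by_cases hb : n ≤ 1 - P a b
    · exact Or.inl hb
    right
    push_neg at hb
    refine le_ciInf fun d => ?_
    rcases le_or_gt n (C d) with hCd | hCd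
    · exact le_max_of_le_right hCd
    have hRd : n ≤ 1 - R a d := by
      rcases max_le_iff.mp (le_refl (max (1 - R a d) (C d))) with _
      rcases le_max_iff.mp (hmax d) with h1 | h1
      · exact h1
      · linarith
    have hsup : min (P a b) (P b d) ≤ P a d := by
      refine le_trans (le_ciSup (f := fun b' => min (P a b') (P b' d)) ?_ b) (htrans a d)
      exact ⟨1, fun x ⟨b', hb'⟩ => hb' ▸ le_trans (min_le_left _ _) (hP a b').2⟩
    have hle : P a d ≤ R a d := hPR a d
    have hPbd : P b d ≤ 1 - n := by
      rcases min_le_iff.mp (hsup.trans (hle.trans (by linarith : R a d ≤ 1 - n))) with h1 | h1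
      · linarith
      · exact h1
    exact le_max_of_le_left (by linarith)
  refine ⟨key, le_ciInf fun b => ?_⟩
  rcases key b with h1 | h1
  · exact le_max_of_le_left h1
  · exact le_max_of_le_right h1
end
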